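/- Let G be a weak FI-group and let K ⊴ G and H ⊴ G be normal weak FI-subgroups with [G, H] ⊆ K ⊆ H. Then setting Q_I := H_I/K_I for each finite I ⊆ ℕ, each Q_I is an abelian group; for each injection f : I ↪ J the homomorphism-modulo-conjugacy G_f restricted to H_I descends to a well-defined genuine homomorphism Q_f : Q_I → Q_J; and these satisfy Q_{id_I} = id and Q_{g∘f} = Q_g ∘ Q_f, so that Q is an FI-module. -/

import Mathlib

universe u

/-- Two homomorphisms `A →* B` are conjugate if they differ by post-composition with an inner
automorphism of `B`; a *homomorphism-modulo-conjugacy* is an equivalence class for this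
relation. -/
def HomConj {A B : Type*} [Group A] [Group B] (f g : A →* B) : Prop :=
  ∃ b : B, ∀ a : A, g a = b * f a * b⁻¹

/-- The inclusion function `↥I → ↥J` of a pair of finite sets `I ⊆ J ⊆ ℕ`. -/
def finsetIncl {I J : Finset ℕ} (h : I ⊆ J) : I → J := fun x => ⟨x.1, h x.2⟩

theorem finsetIncl_injective {I J : Finset ℕ} (h : I ⊆ J) :
    Function.Injective (finsetIncl h) := by
  intro a b hab
  have hv := congrArg Subtype.val hab
  exact Subtype.ext hv

/-- A **weak FI-group**: a group `G_I` for each finite subset `I ⊆ ℕ`; a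
homomorphism-modulo-conjugacy `G_f : G_I → G_J` for each injection `f : I ↪ J` (presented here
by a representative homomorphism `map f`, with the compatibility conditions `G_{id} = id` and
`G_{g∘f} = G_g ∘ G_f` holding up to conjugacy); and a genuine homomorphism `G_I^J = incl h` for
each pair `I ⊆ J`, representing `G_{i_I^J}` and satisfying `G_J^K ∘ G_I^J = G_I^K` on the
nose. -/
structure WeakFIGroup where
  G : Finset ℕ → Type u
  [grp : ∀ I, Group (G I)]
  map : ∀ {I J : Finset ℕ} (f : I → J), Function.Injective f → (G I →* G J)
  incl : ∀ {I J : Finset ℕ}, I ⊆ J → (G I →* G J)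
  map_id : ∀ I : Finset ℕ, HomConj (map (id : I → I) fun _ _ h => h) (MonoidHom.id (G I))
  map_comp : ∀ {I J K : Finset ℕ} (f : I → J) (g : J → K)
      (hf : Function.Injective f) (hg : Function.Injective g),
      HomConj (map (g ∘ f) (hg.comp hf)) ((map g hg).comp (map f hf))
  incl_represents : ∀ {I J : Finset ℕ} (h : I ⊆ J),
      HomConj (map (finsetIncl h) (finsetIncl_injective h)) (incl h)
  incl_comp : ∀ {I J K : Finset ℕ} (hIJ : I ⊆ J) (hJK : J ⊆ K),
      (incl hJK).comp (incl hIJ) = incl (hIJ.trans hJK)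

attribute [instance] WeakFIGroup.grp

/-- A **normal weak FI-subgroup** `H ⊴ G`: a normal subgroup `H_I ⊴ G_I` for each finite
`I ⊆ ℕ`, with `G_f(H_I) ⊆ H_J` for every injection `f : I ↪ J` (this image is well defined
since `H_J` is normal). -/
structure NormalWeakFISub (𝒢 : WeakFIGroup.{u}) where
  H : ∀ I : Finset ℕ, Subgroup (𝒢.G I)
  normal : ∀ I : Finset ℕ, (H I).Normal
  stable : ∀ {I J : Finset ℕ} (f : I → J) (hf : Function.Injective f),
      (H I).map (𝒢.map f hf) ≤ H J

/-- `G` is *boundedly generated in degree `A`* if for every finite set `J ⊆ ℕ`, the group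
`G_J` is generated by its subgroups `G_J(I) = G_I^J(G_I)` over all `I ⊆ J` with `|I| ≤ A`. -/
def WeakFIGroup.BoundedlyGenerated (𝒢 : WeakFIGroup.{u}) (A : ℕ) : Prop :=
  ∀ J : Finset ℕ,
    (⨆ (I : Finset ℕ) (hIJ : I ⊆ J) (_ : I.card ≤ A),
      Subgroup.map (𝒢.incl hIJ) ⊤) = (⊤ : Subgroup (𝒢.G J))

/-- `H_J^{≤N}`: the subgroup of `H_J` generated by the `G_J`-conjugates of the subgroups
`H_J(I) = G_I^J(H_I)` over all `I ⊆ J` with `|I| ≤ N`. -/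
def NormalWeakFISub.leN {𝒢 : WeakFIGroup.{u}} (H : NormalWeakFISub 𝒢) (N : ℕ)
    (J : Finset ℕ) : Subgroup (𝒢.G J) :=
  Subgroup.normalClosure
    (⋃ (I : Finset ℕ) (hIJ : I ⊆ J) (_ : I.card ≤ N),
      ((H.H I).map (𝒢.incl hIJ) : Set (𝒢.G J)))

/-- `H ⊴ G` is *boundedly normally generated in degree `B`* if for every finite set `J ⊆ ℕ`,
the group `H_J` is generated by the `G_J`-conjugates of its subgroups `H_J(I)` over all
`I ⊆ J` with `|I| ≤ B`. -/
def NormalWeakFISub.BoundedlyNormallyGenerated {𝒢 : WeakFIGroup.{u}}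
    (H : NormalWeakFISub 𝒢) (B : ℕ) : Prop :=
  ∀ J : Finset ℕ, H.leN B J = H.H J

/-- A **central filtration** `{G(k)}_{k ≥ 1}` of a weak FI-group `G`, reindexed here so that
`filt k = G(k+1)`: normal weak FI-subgroups with `G(1) = G`, `G(k) ⊇ G(k+1)`, and
`[G, G(k)] ⊆ G(k+1)` for all `k ≥ 1`. -/
structure CentralFiltration (𝒢 : WeakFIGroup.{u}) where
  filt : ℕ → NormalWeakFISub 𝒢
  filt_zero : ∀ I : Finset ℕ, (filt 0).H I = ⊤
  filt_antitone : ∀ (k : ℕ) (I : Finset ℕ), (filt (k + 1)).H I ≤ (filt k).H I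
  central : ∀ (k : ℕ) (I : Finset ℕ),
      ⁅(⊤ : Subgroup (𝒢.G I)), (filt k).H I⁆ ≤ (filt (k + 1)).H I

instance CentralFiltration.normal_subgroupOf {𝒢 : WeakFIGroup.{u}}
    (C : CentralFiltration 𝒢) (k : ℕ) (I : Finset ℕ) :
    (((C.filt (k + 1)).H I).subgroupOf ((C.filt k).H I)).Normal :=
  ((C.filt (k + 1)).normal I).subgroupOf _

/-- The central filtration has *finite rank* if each abelian group `G(k)_I ⧸ G(k+1)_I` is
finitely generated. -/
def CentralFiltration.FiniteRank {𝒢 : WeakFIGroup.{u}} (C : CentralFiltration 𝒢) : Prop :=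
  ∀ (k : ℕ) (I : Finset ℕ),
    Group.FG ((C.filt k).H I ⧸ ((C.filt (k + 1)).H I).subgroupOf ((C.filt k).H I))

/-- The subgroup `K_I` of `H_I`, viewed inside `H_I`. -/
def QSub {𝒢 : WeakFIGroup.{u}} (K H : NormalWeakFISub 𝒢) (I : Finset ℕ) :
    Subgroup (H.H I) :=
  (K.H I).subgroupOf (H.H I)

instance QSub_normal {𝒢 : WeakFIGroup.{u}} (K H : NormalWeakFISub 𝒢) (I : Finset ℕ) :
    (QSub K H I).Normal :=
  (K.normal I).subgroupOf _

/-- The quotient group `Q_I = H_I ⧸ K_I`. -/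
def QGrp {𝒢 : WeakFIGroup.{u}} (K H : NormalWeakFISub 𝒢) (I : Finset ℕ) :=
  H.H I ⧸ QSub K H I

instance {𝒢 : WeakFIGroup.{u}} (K H : NormalWeakFISub 𝒢) (I : Finset ℕ) :
    Group (QGrp K H I) :=
  inferInstanceAs (Group (H.H I ⧸ QSub K H I))

/-!
The point is that `[G, H] ⊆ K` makes conjugation by `G_I` act trivially on `Q_I = H_I ⧸ K_I`:
if `y = b x b⁻¹` with `x, y ∈ H_I`, then `y⁻¹ x = ⁅b, x⁻¹⁆ ∈ K_I`. Applied to `b a = a⁻¹ (a b) a`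
this makes `Q_I` abelian, and applied to the conjugating elements in `G_{id} ≃ id` and
`G_{g∘f} ≃ G_g ∘ G_f` it turns these identities up to conjugacy into genuine identities of the
induced maps on the quotients.
-/

open scoped commutatorElement

namespace Subgroup

variable {A B C : Type*} [Group A] [Group B] [Group C]

theorem mk_eq_mk_of_conj_of_commutator_le {H K : Subgroup A} (hHK : ⁅(⊤ : Subgroup A), H⁆ ≤ K)
    (b : A) {x y : H} (hxy : (y : A) = b * x * b⁻¹) :
    (y : H ⧸ K.subgroupOf H) = x := by
  rw [QuotientGroup.eq, mem_subgroupOf]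
  have hcomm : ((y⁻¹ * x : H) : A) = ⁅b, (x : A)⁻¹⁆ := by
    push_cast
    rw [hxy]
    group
  rw [hcomm]
  exact hHK (commutator_mem_commutator (mem_top b) (H.inv_mem x.2))

theorem mul_comm_of_commutator_le {H K : Subgroup A} [(K.subgroupOf H).Normal]
    (hHK : ⁅(⊤ : Subgroup A), H⁆ ≤ K) (x y : H ⧸ K.subgroupOf H) : x * y = y * x := by
  induction x using QuotientGroup.induction_on with | H a =>
  induction y using QuotientGroup.induction_on with | H c =>
  refine (mk_eq_mk_of_conj_of_commutator_le hHK (a : A)⁻¹ ?_).symm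
  push_cast
  group

def subquotientMap {H K : Subgroup A} {H' K' : Subgroup B} [(K.subgroupOf H).Normal]
    [(K'.subgroupOf H').Normal] (φ : A →* B) (hH : H.map φ ≤ H') (hK : K.map φ ≤ K') :
    H ⧸ K.subgroupOf H →* H' ⧸ K'.subgroupOf H' :=
  QuotientGroup.map _ _ ((φ.comp H.subtype).codRestrict H' fun x => hH (mem_map_of_mem φ x.2))
    fun _ hx => hK (mem_map_of_mem φ hx)

section subquotientMap

variable {H K : Subgroup A} {H' K' : Subgroup B} {H'' K'' : Subgroup C}
  [(K.subgroupOf H).Normal] [(K'.subgroupOf H').Normal] [(K''.subgroupOf H'').Normal]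

@[simp]
theorem subquotientMap_mk (φ : A →* B) (hH : H.map φ ≤ H') (hK : K.map φ ≤ K') (x : H) :
    subquotientMap φ hH hK x = (⟨φ x, hH (mem_map_of_mem φ x.2)⟩ : H') :=
  rfl

theorem subquotientMap_id (hH : H.map (MonoidHom.id A) ≤ H) (hK : K.map (MonoidHom.id A) ≤ K) :
    subquotientMap (MonoidHom.id A) hH hK = MonoidHom.id _ := by
  ext x
  rfl

theorem subquotientMap_comp (φ : A →* B) (ψ : B →* C) (hH : H.map (ψ.comp φ) ≤ H'')
    (hK : K.map (ψ.comp φ) ≤ K'') (hφH : H.map φ ≤ H') (hφK : K.map φ ≤ K')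
    (hψH : H'.map ψ ≤ H'') (hψK : K'.map ψ ≤ K'') :
    subquotientMap (ψ.comp φ) hH hK =
      (subquotientMap ψ hψH hψK).comp (subquotientMap φ hφH hφK) := by
  ext x
  rfl

theorem subquotientMap_eq_of_homConj {φ ψ : A →* B} (hφψ : HomConj φ ψ)
    (hH'K' : ⁅(⊤ : Subgroup B), H'⁆ ≤ K') (hφH : H.map φ ≤ H') (hφK : K.map φ ≤ K')
    (hψH : H.map ψ ≤ H') (hψK : K.map ψ ≤ K') :
    subquotientMap φ hφH hφK = subquotientMap ψ hψH hψK := by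
  obtain ⟨b, hb⟩ := hφψ
  ext x
  exact (mk_eq_mk_of_conj_of_commutator_le hH'K' b (x := ⟨φ x, hφH (mem_map_of_mem φ x.2)⟩)
    (y := ⟨ψ x, hψH (mem_map_of_mem ψ x.2)⟩) (hb x)).symm

end subquotientMap

end Subgroup

attribute [local instance] NormalWeakFISub.normal

theorem stmt15_general (𝒢 : WeakFIGroup.{u}) (K H : NormalWeakFISub 𝒢)
    (hGH : ∀ I : Finset ℕ, ⁅(⊤ : Subgroup (𝒢.G I)), H.H I⁆ ≤ K.H I) :
    (∀ (I : Finset ℕ) (x y : QGrp K H I), x * y = y * x) ∧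
    ∃ Qmap : ∀ (I J : Finset ℕ) (f : I → J), Function.Injective f →
        (QGrp K H I →* QGrp K H J),
      (∀ (I J : Finset ℕ) (f : I → J) (hf : Function.Injective f) (x : H.H I),
        Qmap I J f hf (QuotientGroup.mk' (QSub K H I) x) =
          QuotientGroup.mk' (QSub K H J)
            ⟨𝒢.map f hf (x : 𝒢.G I), H.stable f hf (Subgroup.mem_map_of_mem _ x.2)⟩) ∧
      (∀ I : Finset ℕ,
        Qmap I I (id : I → I) (fun _ _ h => h) = MonoidHom.id (QGrp K H I)) ∧
      (∀ (I J L : Finset ℕ) (f : I → J) (g : J → L)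
          (hf : Function.Injective f) (hg : Function.Injective g),
        Qmap I L (g ∘ f) (hg.comp hf) = (Qmap J L g hg).comp (Qmap I J f hf)) := by
  refine ⟨fun I => Subgroup.mul_comm_of_commutator_le (hGH I),
    fun I J f hf => Subgroup.subquotientMap (𝒢.map f hf) (H.stable f hf) (K.stable f hf),
    fun _ _ _ _ x => Subgroup.subquotientMap_mk _ _ _ x, fun I => ?_, fun I J L f g hf hg => ?_⟩
  · exact (Subgroup.subquotientMap_eq_of_homConj (𝒢.map_id I) (hGH I) _ _
      (H.H I).map_id.le (K.H I).map_id.le).trans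
      (Subgroup.subquotientMap_id _ _)
  · have hH := (Subgroup.map_mono (H.stable f hf)).trans (H.stable g hg)
    have hK := (Subgroup.map_mono (K.stable f hf)).trans (K.stable g hg)
    rw [Subgroup.map_map] at hH hK
    exact (Subgroup.subquotientMap_eq_of_homConj (𝒢.map_comp f g hf hg) (hGH L) _ _ hH hK).trans
      (Subgroup.subquotientMap_comp _ _ _ _ _ _ _ _)

/-- **The graded quotients of a central pair form an FI-module.**  Let `G` be a weak FI-group
and let `K ⊴ G`, `H ⊴ G` be normal weak FI-subgroups with `[G, H] ⊆ K ⊆ H`.  Then each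
`Q_I = H_I ⧸ K_I` is abelian; for each injection `f : I ↪ J` the homomorphism-modulo-conjugacy
`G_f` restricted to `H_I` descends to a well-defined genuine homomorphism `Q_f : Q_I → Q_J`
(characterised by compatibility with the quotient projections); and these maps satisfy
`Q_{id} = id` and `Q_{g∘f} = Q_g ∘ Q_f`, so that `Q` is an FI-module. -/
theorem stmt15 (𝒢 : WeakFIGroup.{u}) (K H : NormalWeakFISub 𝒢)
    (hKH : ∀ I : Finset ℕ, K.H I ≤ H.H I)
    (hGH : ∀ I : Finset ℕ, ⁅(⊤ : Subgroup (𝒢.G I)), H.H I⁆ ≤ K.H I) :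
    (∀ (I : Finset ℕ) (x y : QGrp K H I), x * y = y * x) ∧
    ∃ Qmap : ∀ (I J : Finset ℕ) (f : I → J), Function.Injective f →
        (QGrp K H I →* QGrp K H J),
      (∀ (I J : Finset ℕ) (f : I → J) (hf : Function.Injective f) (x : H.H I),
        Qmap I J f hf (QuotientGroup.mk' (QSub K H I) x) =
          QuotientGroup.mk' (QSub K H J)
            ⟨𝒢.map f hf (x : 𝒢.G I), H.stable f hf (Subgroup.mem_map_of_mem _ x.2)⟩) ∧
      (∀ I : Finset ℕ,
        Qmap I I (id : I → I) (fun _ _ h => h) = MonoidHom.id (QGrp K H I)) ∧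
      (∀ (I J L : Finset ℕ) (f : I → J) (g : J → L)
          (hf : Function.Injective f) (hg : Function.Injective g),
        Qmap I L (g ∘ f) (hg.comp hf) = (Qmap J L g hg).comp (Qmap I J f hf)) :=
  stmt15_general 𝒢 K H hGH
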